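/- Let K be a field of characteristic zero and P = Σ_{j=1}^k a_j X^{α_j}(1+X)^{β_j} where all α_j are equal to a common value α and the f_j = X^{α}(1+X)^{β_j} have distinct β_j. If P ≠ 0 then val(P) ≤ α + (k−1), and this bound is tight. -/

import Mathlib

/-!
Hajós' lemma: if `X ^ #s` divides `∑_{i ∈ s} a_i (1 + X) ^ {β_i}` with distinct exponents `β_i`,
then every `a_i` vanishes. The operator `Q ↦ (1 + X) Q' - β_i Q` has each `(1 + X) ^ b` as an
eigenvector with eigenvalue `b - β_i`; it kills the `i`-th term, keeps the others (in characteristic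
zero), and lowers the order of vanishing at `0` by at most one, so induction on `#s` applies.
Tightness comes from `X ^ n = ((1 + X) - 1) ^ n`.
-/

open Polynomial Finset

section CommRing

variable {R : Type*} [CommRing R]

theorem one_add_X_mul_derivative_one_add_X_pow (n : ℕ) :
    (1 + X : R[X]) * derivative ((1 + X) ^ n) = C (n : R) * (1 + X) ^ n := by
  cases n with
  | zero => simp
  | succ n =>
    rw [derivative_pow, derivative_add, derivative_one, derivative_X]
    push_cast
    ring

theorem one_add_X_mul_derivative_sub_C_mul_sum {ι : Type*} (s : Finset ι) (a : ι → R)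
    (β : ι → ℕ) (b : R) :
    (1 + X) * derivative (∑ i ∈ s, C (a i) * (1 + X) ^ β i)
        - C b * ∑ i ∈ s, C (a i) * (1 + X) ^ β i
      = ∑ i ∈ s, C (a i * (β i - b)) * (1 + X) ^ β i := by
  rw [derivative_sum, mul_sum, mul_sum, ← sum_sub_distrib]
  refine sum_congr rfl fun i _ => ?_
  rw [derivative_C_mul, mul_left_comm, one_add_X_mul_derivative_one_add_X_pow, C_mul, C_sub]
  ring

theorem sum_range_C_choose_mul_one_add_X_pow (n : ℕ) :
    ∑ j ∈ range (n + 1), C ((-1) ^ (n - j) * n.choose j : R) * (1 + X) ^ j = X ^ n := by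
  rw [show (X : R[X]) = 1 + X + -1 by ring, add_pow]
  refine sum_congr rfl fun j _ => ?_
  simp only [add_neg_cancel_comm, C_mul, C_pow, C_neg, C_1, map_natCast]
  ring

end CommRing

theorem eq_zero_of_X_pow_card_dvd_sum_one_add_X_pow {R : Type*} [CommRing R] [IsDomain R]
    [CharZero R] {ι : Type*} [DecidableEq ι] (β : ι → ℕ) (s : Finset ι) (a : ι → R)
    (hβ : Set.InjOn β s) (hdvd : X ^ #s ∣ ∑ i ∈ s, C (a i) * (1 + X) ^ β i) :
    ∀ i ∈ s, a i = 0 := by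
  induction s using Finset.induction_on generalizing a with
  | empty => simp
  | insert i s hi ih =>
    rw [card_insert_of_notMem hi] at hdvd
    have hβi : ∀ j ∈ s, β j ≠ β i := fun j hj =>
      hβ.ne (mem_insert_of_mem hj) (mem_insert_self i s) (ne_of_mem_of_not_mem hj hi)
    have hdvd' : X ^ #s ∣ ∑ j ∈ s, C (a j * (β j - β i)) * (1 + X) ^ β j := by
      have h := dvd_sub ((pow_sub_one_dvd_derivative_of_pow_dvd hdvd).mul_left (1 + X))
        (((pow_dvd_pow X (#s).le_succ).trans hdvd).mul_left (C (β i : R)))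
      rwa [Nat.add_sub_cancel, one_add_X_mul_derivative_sub_C_mul_sum, sum_insert hi, sub_self,
        mul_zero, C_0, zero_mul, zero_add] at h
    have hs : ∀ j ∈ s, a j = 0 := fun j hj =>
      (mul_eq_zero.1 (ih _ (hβ.mono (subset_insert i s)) hdvd' j hj)).resolve_right
        (sub_ne_zero.2 (Nat.cast_injective.ne (hβi j hj)))
    have hX : X ∣ C (a i) * (1 + X) ^ β i := by
      have h := (dvd_pow_self X (#s).succ_ne_zero).trans hdvd
      rwa [sum_insert hi, sum_eq_zero fun j hj => by rw [hs j hj, C_0, zero_mul], add_zero] at h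
    have hai : a i = 0 := by simpa [X_dvd_iff, coeff_zero_eq_eval_zero] using hX
    intro j hj
    rcases mem_insert.1 hj with rfl | hj
    exacts [hai, hs j hj]

theorem stmt19 {K : Type*} [Field K] [CharZero K] (k : ℕ) (hk : 1 ≤ k) (α : ℕ)
    (a : Fin k → K) (β : Fin k → ℕ) (hβ : Function.Injective β)
    (P : K[X]) (hPdef : P = ∑ j, C (a j) * X ^ α * (1 + X) ^ (β j))
    (hP : P ≠ 0) :
    P.rootMultiplicity 0 ≤ α + (k - 1) ∧
      ∃ (a' : Fin k → K) (β' : Fin k → ℕ), Function.Injective β' ∧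
        (∑ j, C (a' j) * X ^ α * (1 + X) ^ (β' j)) ≠ 0 ∧
        (∑ j, C (a' j) * X ^ α * (1 + X) ^ (β' j) : K[X]).rootMultiplicity 0 = α + (k - 1) := by
  have hrm (m : ℕ) : ((X : K[X]) ^ m).rootMultiplicity 0 = m := by
    simpa using rootMultiplicity_X_sub_C_pow (0 : K) m
  obtain ⟨n, rfl⟩ : ∃ n, k = n + 1 := ⟨k - 1, by omega⟩
  rw [Nat.add_sub_cancel]
  refine ⟨?_, ?_⟩
  · set Q : K[X] := ∑ j, C (a j) * (1 + X) ^ β j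
    have hPQ : P = X ^ α * Q := by
      rw [hPdef, mul_sum]
      exact sum_congr rfl fun j _ => by ring
    have hQ : Q ≠ 0 := fun h => hP (by rw [hPQ, h, mul_zero])
    rw [hPQ, rootMultiplicity_mul (hPQ ▸ hP), hrm, add_le_add_iff_left]
    by_contra! hlt
    have hdvd : X ^ #(univ : Finset (Fin (n + 1))) ∣ Q := by
      simpa using (le_rootMultiplicity_iff hQ).1 hlt
    have ha := eq_zero_of_X_pow_card_dvd_sum_one_add_X_pow β univ a hβ.injOn hdvd
    exact hQ (sum_eq_zero fun j hj => by rw [ha j hj, C_0, zero_mul])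
  · have hsum : ∑ j : Fin (n + 1), C ((-1) ^ (n - j) * n.choose j : K) * X ^ α * (1 + X) ^ (j : ℕ)
        = X ^ (α + n) := by
      rw [pow_add, ← sum_range_C_choose_mul_one_add_X_pow n, mul_sum,
        ← Fin.sum_univ_eq_sum_range (fun j => X ^ α * (C _ * (1 + X) ^ j))]
      exact sum_congr rfl fun j _ => by ring
    refine ⟨fun j => (-1) ^ (n - j) * n.choose j, fun j => j, Fin.val_injective, ?_, ?_⟩
    · rw [hsum]
      exact pow_ne_zero _ X_ne_zero
    · rw [hsum, hrm]
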